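/- arXiv:0902.4063 — 5 statements merged into one kernel-verified Lean document; each statement's English description precedes it below -/
import Mathlib

section
/- Let R be a (noncommutative) ring and let A, B ∈ R satisfy A*B - B*A = 1. Then for all natural numbers n and m, the commutator A^n * B^m - B^m * A^n equals the sum over k from 1 to min(n,m) of k! * (choose m k) * (choose n k) * B^(m-k) * A^(n-k). -/
open Finset

private lemma weyl_aux_comm {R : Type*} [Ring R] (A B : R)
    (h : A * B - B * A = 1) : ∀ j : ℕ, A * B ^ j = B ^ j * A + j • B ^ (j - 1) := by
  have hAB : A * B = B * A + 1 := by rw [sub_eq_iff_eq_add.mp h, add_comm]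
  have main : ∀ j : ℕ, A * B ^ (j + 1) = B ^ (j + 1) * A + (j + 1) • B ^ j := by
    intro j
    induction j with
    | zero => simpa using hAB
    | succ j ih =>
      calc A * B ^ (j + 2) = (A * B ^ (j + 1)) * B := by
            rw [pow_succ, ← mul_assoc]
        _ = (B ^ (j + 1) * A + (j + 1) • B ^ j) * B := by rw [ih]
        _ = B ^ (j + 1) * (A * B) + (j + 1) • B ^ (j + 1) := by
            rw [add_mul, mul_assoc, smul_mul_assoc, ← pow_succ]
        _ = B ^ (j + 2) * A + (j + 2) • B ^ (j + 1) := by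
            rw [hAB, mul_add, mul_one, ← mul_assoc, ← pow_succ, add_assoc]
            congr 1
            simp [add_smul, two_smul, two_mul]
            abel
  intro j
  cases j with
  | zero => simp
  | succ j => simpa using main j

private lemma weyl_key {R : Type*} [Ring R] (A B : R)
    (h : A * B - B * A = 1) (m : ℕ) : ∀ n : ℕ,
    A ^ n * B ^ m = ∑ k ∈ Finset.range (m + 1),
      (k.factorial * m.choose k * n.choose k) • (B ^ (m - k) * A ^ (n - k)) := by
  intro n
  induction n with
  | zero =>
    rw [Finset.sum_eq_single 0]
    · simp
    · intro k hk hk0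
      rw [Nat.choose_eq_zero_of_lt (Nat.pos_of_ne_zero hk0)]
      simp
    · simp
  | succ n ih =>
    have step : A ^ (n + 1) * B ^ m = A * (A ^ n * B ^ m) := by
      rw [pow_succ', mul_assoc]
    rw [step, ih, Finset.mul_sum]
    have expand : ∀ k ∈ Finset.range (m + 1),
        A * ((k.factorial * m.choose k * n.choose k) • (B ^ (m - k) * A ^ (n - k)))
        = (k.factorial * m.choose k * n.choose k) • (B ^ (m - k) * (A * A ^ (n - k)))
          + ((k.factorial * m.choose k * n.choose k) * (m - k)) •
              (B ^ (m - k - 1) * A ^ (n - k)) := by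
      intro k _
      rw [mul_smul_comm,
        show A * (B ^ (m - k) * A ^ (n - k)) = (A * B ^ (m - k)) * A ^ (n - k) from by
          rw [mul_assoc],
        weyl_aux_comm A B h (m - k), add_mul, smul_mul_assoc, smul_add, smul_smul,
        mul_assoc, mul_assoc (B ^ (m - k)) A]
    rw [Finset.sum_congr rfl expand, Finset.sum_add_distrib]
    set d : ℕ → ℕ := fun k => if k = 0 then 0 else n.choose (k - 1) with hd
    have choose_split : ∀ k : ℕ, (n + 1).choose k = n.choose k + d k := by
      intro k
      cases k with
      | zero => simp [hd]
      | succ k => simp [hd, Nat.choose_succ_succ, add_comm]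
    have Tsplit : ∑ k ∈ Finset.range (m + 1),
        (k.factorial * m.choose k * (n + 1).choose k) • (B ^ (m - k) * A ^ (n + 1 - k))
        = (∑ k ∈ Finset.range (m + 1),
            (k.factorial * m.choose k * n.choose k) • (B ^ (m - k) * A ^ (n + 1 - k)))
          + ∑ k ∈ Finset.range (m + 1),
            (k.factorial * m.choose k * d k) • (B ^ (m - k) * A ^ (n + 1 - k)) := by
      rw [← Finset.sum_add_distrib]
      refine Finset.sum_congr rfl fun k _ => ?_
      rw [choose_split k, Nat.mul_add, add_smul]
    rw [Tsplit]
    congr 1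
    · -- S1 = T1
      refine Finset.sum_congr rfl fun k _ => ?_
      by_cases hk : k ≤ n
      · have he : n - k + 1 = n + 1 - k := by omega
        rw [← pow_succ', he]
      · simp [Nat.choose_eq_zero_of_lt (show n < k by omega)]
    · -- S2 = T2
      rw [Finset.sum_range_succ, Finset.sum_range_succ' _ m]
      have h1 : (m.factorial * m.choose m * n.choose m * (m - m)) •
          (B ^ (m - m - 1) * A ^ (n - m)) = 0 := by simp
      have h2 : ((0:ℕ).factorial * m.choose 0 * d 0) • (B ^ (m - 0) * A ^ (n + 1 - 0))
          = 0 := by simp [hd]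
      rw [h1, h2, add_zero, add_zero]
      refine Finset.sum_congr rfl fun k hk => ?_
      have hd1 : d (k + 1) = n.choose k := by simp [hd]
      rw [hd1, Nat.succ_sub_succ, show m - (k + 1) = m - k - 1 from by omega]
      congr 1
      have hc := Nat.choose_succ_right_eq m k
      calc k.factorial * m.choose k * n.choose k * (m - k)
          = k.factorial * n.choose k * (m.choose k * (m - k)) := by ring
        _ = k.factorial * n.choose k * (m.choose (k + 1) * (k + 1)) := by rw [hc]
        _ = (k + 1).factorial * m.choose (k + 1) * n.choose k := by
            rw [Nat.factorial_succ]; ring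

theorem weyl_commutator_power_formula {R : Type*} [Ring R] (A B : R)
    (h : A * B - B * A = 1) (n m : ℕ) :
    A ^ n * B ^ m - B ^ m * A ^ n =
      ∑ k ∈ Finset.Icc 1 (min n m),
        (k.factorial * m.choose k * n.choose k : ℕ) • (B ^ (m - k) * A ^ (n - k)) := by
  rw [weyl_key A B h m n, Finset.sum_range_succ' _ m]
  have h0 : (Nat.factorial 0 * m.choose 0 * n.choose 0) • (B ^ (m - 0) * A ^ (n - 0))
      = B ^ m * A ^ n := by simp
  rw [h0, add_sub_cancel_right]
  have hsub : (∑ k ∈ Finset.Icc 1 (min n m),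
        (k.factorial * m.choose k * n.choose k : ℕ) • (B ^ (m - k) * A ^ (n - k)))
      = ∑ k ∈ Finset.Icc 1 m,
        (k.factorial * m.choose k * n.choose k : ℕ) • (B ^ (m - k) * A ^ (n - k)) := by
    refine Finset.sum_subset (Finset.Icc_subset_Icc_right (min_le_right n m)) ?_
    intro x hx hx'
    simp only [Finset.mem_Icc] at hx hx'
    have : n < x := by omega
    simp [Nat.choose_eq_zero_of_lt this]
  rw [hsub, ← Finset.Ico_add_one_right_eq_Icc, Finset.sum_Ico_eq_sum_range]
  refine Finset.sum_congr (by norm_num) fun k _ => ?_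
  rw [add_comm 1 k]
end

section
/- Let R be a ring and A, B ∈ R satisfy A*B - B*A = 1. Then for every natural number n, (A+B)^n equals the double sum over m from 0 to n and k from 0 to min(m, n-m) of the Weyl binomial coefficient {n choose m}_k = n! / (2^k * k! * (m-k)! * (n-m-k)!) times B^(m-k) * A^(n-m-k). -/
/-- The Weyl binomial coefficient `{n choose m}_k = n! / (2^k k! (m-k)! (n-m-k)!)`. -/
def weylBinom (n m k : ℕ) : ℕ :=
  n.factorial / (2 ^ k * k.factorial * (m - k).factorial * (n - m - k).factorial)

/-- odd double factorial `(2k-1)!!` -/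
def oddF (k : ℕ) : ℕ := ∏ i ∈ Finset.range k, (2 * i + 1)

/-- coefficient for the grouped expansion -/
def wc (n k : ℕ) : ℕ := Nat.choose n (2 * k) * oddF k

lemma oddF_succ (k : ℕ) : oddF (k + 1) = oddF k * (2 * k + 1) :=
  Finset.prod_range_succ _ _

lemma two_mul_factorial (k : ℕ) :
    (2 * k).factorial = oddF k * (2 ^ k * k.factorial) := by
  induction k with
  | zero => simp [oddF]
  | succ k ih =>
    have h2 : 2 * (k + 1) = (2 * k + 1) + 1 := by ring
    rw [h2, Nat.factorial_succ, Nat.factorial_succ, ih, oddF_succ, Nat.factorial_succ, pow_succ]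
    ring

lemma weyl_eq {n m k : ℕ} (hkm : k ≤ m) (hmn : m + k ≤ n) :
    weylBinom n m k = wc n k * Nat.choose (n - 2 * k) (m - k) := by
  have h2k : 2 * k ≤ n := by omega
  have hmk : m - k ≤ n - 2 * k := by omega
  have h1 := Nat.choose_mul_factorial_mul_factorial h2k
  have h2 := Nat.choose_mul_factorial_mul_factorial hmk
  have h3 : n - 2 * k - (m - k) = n - m - k := by omega
  unfold weylBinom
  apply Nat.div_eq_of_eq_mul_left
  · positivity
  · calc n.factorial = Nat.choose n (2 * k) * (2 * k).factorial * (n - 2 * k).factorial := h1.symm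
      _ = Nat.choose n (2 * k) * (oddF k * (2 ^ k * k.factorial)) *
          ((n - 2 * k).choose (m - k) * (m - k).factorial * (n - 2 * k - (m - k)).factorial) := by
        rw [two_mul_factorial, h2]
      _ = wc n k * (n - 2 * k).choose (m - k) *
          (2 ^ k * k.factorial * (m - k).factorial * (n - m - k).factorial) := by
        rw [h3, wc]; ring

lemma choose_mul_sub (j a : ℕ) : j.choose a * (j - a) = j * ((j - 1).choose a) := by
  cases j with
  | zero => cases a <;> simp
  | succ i =>
    calc (i + 1).choose a * (i + 1 - a) = (i + 1).choose (a + 1) * (a + 1) :=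
          (Nat.choose_succ_right_eq (i + 1) a).symm
      _ = (i + 1) * i.choose a := (Nat.add_one_mul_choose_eq i a).symm
      _ = (i + 1) * ((i + 1 - 1).choose a) := by rw [Nat.add_sub_cancel]

def dd (n k : ℕ) : ℕ := match k with
  | 0 => 0
  | k + 1 => wc n k * (n - 2 * k)

@[simp] lemma dd_zero (n : ℕ) : dd n 0 = 0 := rfl
@[simp] lemma dd_succ (n k : ℕ) : dd n (k + 1) = wc n k * (n - 2 * k) := rfl

lemma wc_zero_of (n k : ℕ) (hk : n < 2 * k) : wc n k = 0 := by
  simp [wc, Nat.choose_eq_zero_of_lt hk]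

lemma wc_succ (n k : ℕ) : wc (n + 1) k = wc n k + dd n k := by
  cases k with
  | zero => simp [wc, oddF]
  | succ j =>
    show Nat.choose (n + 1) (2 * (j + 1)) * oddF (j + 1)
        = Nat.choose n (2 * (j + 1)) * oddF (j + 1) + wc n j * (n - 2 * j)
    have h2 : 2 * (j + 1) = (2 * j + 1) + 1 := by ring
    rw [h2, Nat.choose_succ_succ', oddF_succ]
    have h3 := Nat.choose_succ_right_eq n (2 * j)
    calc (n.choose (2 * j + 1) + n.choose (2 * j + 1 + 1)) * (oddF j * (2 * j + 1))
        = n.choose (2 * j + 1) * (2 * j + 1) * oddF j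
          + n.choose (2 * j + 1 + 1) * (oddF j * (2 * j + 1)) := by ring
      _ = n.choose (2 * j) * (n - 2 * j) * oddF j
          + n.choose (2 * j + 1 + 1) * (oddF j * (2 * j + 1)) := by rw [h3]
      _ = n.choose (2 * j + 1 + 1) * (oddF j * (2 * j + 1)) + wc n j * (n - 2 * j) := by
          rw [wc]; ring

section Ops
variable {R : Type*} [Ring R] (A B : R)

lemma coeff_move (c e : ℕ) (x y : R) :
    (c : R) * (x * ((e : R) * y)) = ((c * e : ℕ) : R) * (x * y) := by
  calc (c : R) * (x * ((e : R) * y)) = (c : R) * ((x * (e : R)) * y) := by rw [mul_assoc]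
    _ = (c : R) * (((e : R) * x) * y) := by rw [(Nat.cast_commute e x).symm.eq]
    _ = ((c * e : ℕ) : R) * (x * y) := by push_cast; rw [mul_assoc, mul_assoc]

lemma pow_mul_B (h : A * B - B * A = 1) (b : ℕ) :
    A ^ b * B = B * A ^ b + (b : R) * A ^ (b - 1) := by
  have hab : A * B = 1 + B * A := sub_eq_iff_eq_add.mp h
  induction b with
  | zero => simp
  | succ b ih =>
    have key : (b : R) * A ^ (b - 1) * A = (b : R) * A ^ b := by
      cases b with
      | zero => simp
      | succ b => rw [mul_assoc, Nat.add_sub_cancel, ← pow_succ]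
    push_cast
    calc A ^ (b + 1) * B = A ^ b * (A * B) := by rw [pow_succ, mul_assoc]
      _ = A ^ b + A ^ b * B * A := by rw [hab]; noncomm_ring
      _ = A ^ b + (B * A ^ b + (b : R) * A ^ (b - 1)) * A := by rw [ih]
      _ = A ^ b + (B * A ^ (b + 1) + (b : R) * A ^ b) := by
          rw [add_mul, mul_assoc B, ← pow_succ, key]
      _ = B * A ^ (b + 1) + ((b : R) + 1) * A ^ b := by noncomm_ring

/-- normally ordered binomial-like sum -/
def Tsum (j : ℕ) : R :=
  ∑ a ∈ Finset.range (j + 1), (Nat.choose j a : R) * (B ^ a * A ^ (j - a))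

lemma term_mul (h : A * B - B * A = 1) (a b : ℕ) :
    (B ^ a * A ^ b) * (A + B) =
      B ^ a * A ^ (b + 1) + B ^ (a + 1) * A ^ b + B ^ a * ((b : R) * A ^ (b - 1)) := by
  rw [mul_add, mul_assoc, mul_assoc, pow_mul_B A B h b, ← pow_succ, pow_succ B a]
  noncomm_ring

lemma Trec (h : A * B - B * A = 1) (j : ℕ) :
    Tsum A B j * (A + B) = Tsum A B (j + 1) + (j : R) * Tsum A B (j - 1) := by
  have e1 : Tsum A B j * (A + B)
      = ∑ a ∈ Finset.range (j + 1),
          ((Nat.choose j a : R) * (B ^ a * A ^ (j - a + 1))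
          + (Nat.choose j a : R) * (B ^ (a + 1) * A ^ (j - a))
          + ((Nat.choose j a * (j - a) : ℕ) : R) * (B ^ a * A ^ (j - a - 1))) := by
    rw [Tsum, Finset.sum_mul]
    refine Finset.sum_congr rfl fun a ha => ?_
    rw [mul_assoc, term_mul A B h a (j - a), mul_add, mul_add, coeff_move]
  rw [e1, Finset.sum_add_distrib, Finset.sum_add_distrib]
  congr 1
  · -- S1 + S2 = Tsum (j+1)
    have step1 : Tsum A B (j + 1)
        = ∑ a ∈ Finset.range (j + 1),
            ((Nat.choose j a : R) * (B ^ (a + 1) * A ^ (j - a))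
             + (Nat.choose j (a + 1) : R) * (B ^ (a + 1) * A ^ (j - a)))
          + (Nat.choose j 0 : R) * (B ^ 0 * A ^ (j + 1)) := by
      rw [Tsum, Finset.sum_range_succ'
        (fun a => (Nat.choose (j + 1) a : R) * (B ^ a * A ^ (j + 1 - a))) (j + 1)]
      simp only [Nat.choose_succ_succ', Nat.succ_sub_succ, Nat.choose_zero_right,
        Nat.sub_zero]
      push_cast
      simp only [add_mul]
    have hs1 : ∑ a ∈ Finset.range (j + 2), (Nat.choose j a : R) * (B ^ a * A ^ (j + 1 - a))
        = (∑ a ∈ Finset.range (j + 1),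
            (Nat.choose j (a + 1) : R) * (B ^ (a + 1) * A ^ (j - a)))
          + (Nat.choose j 0 : R) * (B ^ 0 * A ^ (j + 1)) := by
      rw [Finset.sum_range_succ'
        (fun a => (Nat.choose j a : R) * (B ^ a * A ^ (j + 1 - a))) (j + 1)]
      simp only [Nat.succ_sub_succ, Nat.sub_zero]
    have hs2 : ∑ a ∈ Finset.range (j + 2), (Nat.choose j a : R) * (B ^ a * A ^ (j + 1 - a))
        = ∑ a ∈ Finset.range (j + 1), (Nat.choose j a : R) * (B ^ a * A ^ (j - a + 1)) := by
      rw [Finset.sum_range_succ, Nat.choose_succ_self]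
      simp only [Nat.cast_zero, zero_mul, add_zero]
      refine Finset.sum_congr rfl fun a ha => ?_
      have ha' : a ≤ j := by simpa [Nat.lt_succ_iff] using ha
      have hx : j + 1 - a = j - a + 1 := by omega
      rw [hx]
    rw [step1, Finset.sum_add_distrib, add_assoc, ← hs1, hs2]
    exact add_comm _ _
  · -- S3 = j * Tsum (j-1)
    cases j with
    | zero => simp [Tsum]
    | succ i =>
      rw [Finset.sum_range_succ]
      simp only [Nat.sub_self, Nat.mul_zero, Nat.cast_zero, zero_mul, add_zero]
      rw [Tsum, Finset.mul_sum]
      refine Finset.sum_congr rfl fun a ha => ?_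
      rw [choose_mul_sub]
      have hi : i + 1 - a - 1 = i - a := by omega
      have hi2 : i + 1 - 1 = i := rfl
      rw [hi, hi2]
      push_cast
      rw [mul_assoc]



lemma key_lemma (h : A * B - B * A = 1) (n : ℕ) :
    (A + B) ^ n = ∑ k ∈ Finset.range (n + 1), (wc n k : R) * Tsum A B (n - 2 * k) := by
  induction n with
  | zero => simp [wc, oddF, Tsum]
  | succ n ih =>
    have RHSeq : ∑ k ∈ Finset.range (n + 2), (wc (n + 1) k : R) * Tsum A B (n + 1 - 2 * k)
        = ∑ k ∈ Finset.range (n + 1), (wc n k : R) * Tsum A B (n - 2 * k + 1)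
          + ∑ k ∈ Finset.range (n + 1),
              ((wc n k * (n - 2 * k) : ℕ) : R) * Tsum A B (n - 2 * k - 1) := by
      have split : ∀ k, (wc (n + 1) k : R) * Tsum A B (n + 1 - 2 * k)
          = (wc n k : R) * Tsum A B (n + 1 - 2 * k)
            + (dd n k : R) * Tsum A B (n + 1 - 2 * k) := by
        intro k; rw [wc_succ]; push_cast; rw [add_mul]
      rw [Finset.sum_congr rfl fun k _ => split k, Finset.sum_add_distrib]
      congr 1
      · rw [Finset.sum_range_succ, wc_zero_of n (n + 1) (by omega)]
        simp only [Nat.cast_zero, zero_mul, add_zero]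
        refine Finset.sum_congr rfl fun k hk => ?_
        by_cases hc : 2 * k ≤ n
        · have hx : n + 1 - 2 * k = n - 2 * k + 1 := by omega
          rw [hx]
        · rw [wc_zero_of n k (by omega)]
          simp
      · rw [Finset.sum_range_succ'
            (fun k => (dd n k : R) * Tsum A B (n + 1 - 2 * k)) (n + 1)]
        simp only [dd_zero, dd_succ, Nat.cast_zero, zero_mul, add_zero]
        refine Finset.sum_congr rfl fun k hk => ?_
        have hx : n + 1 - 2 * (k + 1) = n - 2 * k - 1 := by omega
        rw [hx]
    rw [pow_succ, ih, Finset.sum_mul, RHSeq, ← Finset.sum_add_distrib]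
    refine Finset.sum_congr rfl fun k hk => ?_
    rw [mul_assoc, Trec A B h, mul_add, ← mul_assoc]
    push_cast
    rw [mul_assoc]

end Ops

theorem weyl_normal_ordering_power {R : Type*} [Ring R] (A B : R)
    (h : A * B - B * A = 1) (n : ℕ) :
    (A + B) ^ n =
      ∑ m ∈ Finset.range (n + 1), ∑ k ∈ Finset.range (min m (n - m) + 1),
        (weylBinom n m k : R) * (B ^ (m - k) * A ^ (n - m - k)) := by
  rw [key_lemma A B h n]
  have expand : ∀ k, (wc n k : R) * Tsum A B (n - 2 * k)
      = ∑ a ∈ Finset.range (n - 2 * k + 1),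
          ((wc n k * Nat.choose (n - 2 * k) a : ℕ) : R) * (B ^ a * A ^ (n - 2 * k - a)) := by
    intro k
    rw [Tsum, Finset.mul_sum]
    refine Finset.sum_congr rfl fun a ha => ?_
    push_cast
    rw [mul_assoc]
  rw [Finset.sum_congr rfl fun k _ => expand k]
  rw [← Finset.sum_subset (Finset.range_subset_range.mpr (show n / 2 + 1 ≤ n + 1 by omega))
    (fun x _ hx => Finset.sum_eq_zero fun a _ => by
      rw [wc_zero_of n x (by simp only [Finset.mem_range] at hx; omega)]
      simp)]
  rw [Finset.sum_sigma', Finset.sum_sigma']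
  refine Finset.sum_nbij' (fun p => ⟨p.1 + p.2, p.1⟩) (fun q => ⟨q.2, q.1 - q.2⟩)
    ?_ ?_ ?_ ?_ ?_
  · rintro ⟨k, a⟩ hp
    simp only [Finset.mem_sigma, Finset.mem_range, Nat.lt_succ_iff, le_min_iff] at hp ⊢
    omega
  · rintro ⟨m, k⟩ hq
    simp only [Finset.mem_sigma, Finset.mem_range, Nat.lt_succ_iff, le_min_iff] at hq ⊢
    omega
  · rintro ⟨k, a⟩ hp
    simp
  · rintro ⟨m, k⟩ hq
    simp only [Finset.mem_sigma, Finset.mem_range, Nat.lt_succ_iff, le_min_iff] at hq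
    have : k + (m - k) = m := by omega
    simp [this]
  · rintro ⟨k, a⟩ hp
    simp only [Finset.mem_sigma, Finset.mem_range, Nat.lt_succ_iff, le_min_iff] at hp
    have h1 : weylBinom n (k + a) k = wc n k * Nat.choose (n - 2 * k) (k + a - k) :=
      weyl_eq (by omega) (by omega)
    have h2 : k + a - k = a := by omega
    have h3 : n - (k + a) - k = n - 2 * k - a := by omega
    rw [h1, h2, h3]
end

section
/- Let R be a ring and a, ad ∈ R with a*ad - ad*a = 1. Then for every natural number k, the commutator [ad^k * a^k, ad*a] = 0; that is, every normally ordered balanced monomial commutes with the number operator N = ad*a. -/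
lemma pow_comm_N_a {R : Type*} [Ring R] (a ad : R) (h : a * ad - ad * a = 1) (k : ℕ) :
    a ^ k * (ad * a) = (ad * a) * a ^ k + k • a ^ k := by
  induction k with
  | zero => simp
  | succ n ih =>
    have ha : a * (ad * a) = (ad * a) * a + a := by
      have : a * ad = ad * a + 1 := by rw [← sub_eq_iff_eq_add']; exact h
      calc a * (ad * a) = (a * ad) * a := by noncomm_ring
        _ = (ad * a + 1) * a := by rw [this]
        _ = (ad * a) * a + a := by noncomm_ring
    have : a ^ (n+1) * (ad * a) = a ^ n * (a * (ad * a)) := by noncomm_ring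
    rw [this, ha, succ_nsmul]
    rw [mul_add, ← mul_assoc, ih]
    noncomm_ring

lemma pow_comm_N_ad {R : Type*} [Ring R] (a ad : R) (h : a * ad - ad * a = 1) (k : ℕ) :
    (ad * a) * ad ^ k = ad ^ k * (ad * a) + k • ad ^ k := by
  induction k with
  | zero => simp
  | succ n ih =>
    have had : (ad * a) * ad = ad * (ad * a) + ad := by
      have : a * ad = ad * a + 1 := by rw [← sub_eq_iff_eq_add']; exact h
      calc (ad * a) * ad = ad * (a * ad) := by noncomm_ring
        _ = ad * (ad * a + 1) := by rw [this]
        _ = ad * (ad * a) + ad := by noncomm_ring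
    have : (ad * a) * ad ^ (n+1) = ((ad * a) * ad ^ n) * ad := by
      rw [pow_succ]; noncomm_ring
    rw [this, ih, succ_nsmul, add_mul, mul_assoc, had, smul_mul_assoc, ← pow_succ]
    noncomm_ring

theorem balanced_monomial_commutes_with_number_operator {R : Type*} [Ring R]
    (a ad : R) (h : a * ad - ad * a = 1) (k : ℕ) :
    (ad ^ k * a ^ k) * (ad * a) - (ad * a) * (ad ^ k * a ^ k) = 0 := by
  have h1 := pow_comm_N_a a ad h k
  have h2 := pow_comm_N_ad a ad h k
  calc (ad ^ k * a ^ k) * (ad * a) - (ad * a) * (ad ^ k * a ^ k)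
      = ad ^ k * (a ^ k * (ad * a)) - ((ad * a) * ad ^ k) * a ^ k := by noncomm_ring
    _ = ad ^ k * ((ad * a) * a ^ k + k • a ^ k)
        - (ad ^ k * (ad * a) + k • ad ^ k) * a ^ k := by rw [h1, h2]
    _ = 0 := by
        rw [mul_add, add_mul, mul_smul_comm, smul_mul_assoc]
        noncomm_ring
end

section
/- Let R be a ring and a, ad ∈ R with a*ad - ad*a = 1. For natural numbers n > m, the commutator [ad^n - a^n, ad^n + a^n] ≡ -2 * n! modulo terms of the form ad^j * a^j with j ≥ 1; in particular for n = 4: [ad^4 - a^4, ad^4 + a^4] = -2*(4!) + (terms of the form Σ_{j=1}^{4} c_j ad^j a^j). Specifically, the scalar (constant) part of [ad^n - a^n, ad^n + a^n] under normal ordering is -2 * n!. -/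
/-- Ascending product `(k+1)(k+2)⋯(k+n)`. -/
def ascF : ℕ → ℕ → ℕ
  | _, 0 => 1
  | k, n+1 => (k+1) * ascF (k+1) n

lemma ascF_mul_factorial : ∀ (n k : ℕ), ascF k n * k.factorial = (k + n).factorial := by
  intro n
  induction n with
  | zero => intro k; simp [ascF]
  | succ n ih =>
    intro k
    calc ascF k (n+1) * k.factorial = ascF (k+1) n * ((k+1) * k.factorial) := by
          simp [ascF]; ring
      _ = ascF (k+1) n * (k+1).factorial := by rw [Nat.factorial_succ]
      _ = (k + 1 + n).factorial := ih (k+1)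
      _ = (k + (n+1)).factorial := by ring_nf

lemma ascF_zero (n : ℕ) : ascF 0 n = n.factorial := by
  simpa using ascF_mul_factorial n 0

/-- The ordered product `(N + (k+n)) ⋯ (N + (k+2)) (N + (k+1))` with `N = ad*a`. -/
def gW {R : Type*} [Ring R] (a ad : R) : ℕ → ℕ → R
  | _, 0 => 1
  | k, n+1 => gW a ad (k+1) n * (ad * a + ((k+1 : ℕ) : R))

section

variable {R : Type*} [Ring R] (a ad : R) (h : a * ad - ad * a = 1)

include h

lemma hc : a * ad = ad * a + 1 := by
  exact sub_eq_iff_eq_add.mp h |>.trans (add_comm _ _)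

lemma a_pow_mul_ad : ∀ j : ℕ, a ^ (j+1) * ad = ad * a ^ (j+1) + ((j+1 : ℕ) : R) * a ^ j := by
  intro j
  induction j with
  | zero => simpa using hc a ad h
  | succ j ih =>
    have e : a ^ (j+2) * ad = a * (a ^ (j+1) * ad) := by
      rw [← mul_assoc, ← pow_succ']
    have hcm : a * (((j+1:ℕ):R) * a ^ j) = ((j+1:ℕ):R) * a ^ (j+1) := by
      rw [← mul_assoc, ((Nat.cast_commute (j+1) a).symm).eq, mul_assoc, ← pow_succ']
    rw [e, ih, mul_add, hcm, ← mul_assoc, hc a ad h]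
    have e2 : ad * a * a ^ (j+1) = ad * a ^ (j+2) := by rw [mul_assoc, ← pow_succ']
    rw [add_mul, one_mul, e2]
    push_cast
    noncomm_ring

lemma a_mul_gW : ∀ (n k : ℕ), a * gW a ad k n = gW a ad (k+1) n * a := by
  intro n
  induction n with
  | zero => simp [gW]
  | succ n ih =>
    intro k
    show a * (gW a ad (k+1) n * (ad * a + ((k+1:ℕ) : R))) = _
    rw [← mul_assoc, ih (k+1)]
    have key : a * (ad * a + ((k+1:ℕ) : R)) = (ad * a + ((k+1+1:ℕ) : R)) * a := by
      push_cast
      have hcm : Commute ((k:R)+1) a := (Nat.cast_commute k a).add_left (Commute.one_left a)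
      calc a * (ad * a + ((k:R)+1)) = (a * ad) * a + a * ((k:R)+1) := by noncomm_ring
        _ = (ad * a + 1) * a + ((k:R)+1) * a := by rw [hc a ad h, hcm.eq]
        _ = (ad * a + ((k:R)+1+1)) * a := by noncomm_ring
    calc gW a ad (k+1+1) n * a * (ad * a + ((k+1:ℕ):R))
        = gW a ad (k+1+1) n * (a * (ad * a + ((k+1:ℕ):R))) := by rw [mul_assoc]
      _ = gW a ad (k+1+1) n * ((ad * a + ((k+1+1:ℕ):R)) * a) := by rw [key]
      _ = gW a ad (k+1) (n+1) * a := by rw [show gW a ad (k+1) (n+1) = gW a ad (k+1+1) n * (ad * a + ((k+1+1:ℕ):R)) from rfl, mul_assoc]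

lemma pow_mul_pow : ∀ n : ℕ, a ^ n * ad ^ n = gW a ad 0 n := by
  intro n
  induction n with
  | zero => simp [gW]
  | succ n ih =>
    have e1 : a ^ (n+1) * ad ^ (n+1) = a * (a ^ n * ad ^ n) * ad := by
      rw [pow_succ', pow_succ]
      noncomm_ring
    rw [e1, ih, a_mul_gW a ad h, mul_assoc, hc a ad h]
    show _ = gW a ad 1 n * (ad * a + ((0+1:ℕ):R))
    norm_num

lemma term_mul_s14 (i : ℕ) :
    (ad ^ (i+1) * a ^ (i+1)) * (ad * a)
      = ad ^ (i+2) * a ^ (i+2) + ((i:ℤ)+1) • (ad ^ (i+1) * a ^ (i+1)) := by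
  have h1 : (ad ^ (i+1) * a ^ (i+1)) * (ad * a)
      = ad ^ (i+1) * (a ^ (i+1) * ad) * a := by noncomm_ring
  rw [h1, a_pow_mul_ad a ad h i]
  have hcomm : ad ^ (i+1) * ((i+1:ℕ) : R) = ((i+1:ℕ) : R) * ad ^ (i+1) :=
    ((Nat.cast_commute (i+1) (ad ^ (i+1)))).symm.eq
  have : ad ^ (i+1) * (((i+1:ℕ):R) * a ^ i) * a
      = ((i+1:ℕ):R) * (ad ^ (i+1) * a ^ (i+1)) := by
    rw [← mul_assoc, ← mul_assoc, hcomm]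
    noncomm_ring [pow_succ]
  rw [mul_add, add_mul, this]
  rw [zsmul_eq_mul]
  push_cast
  congr 1
  calc ad ^ (i+1) * (ad * a ^ (i+1)) * a = (ad ^ (i+1) * ad) * (a ^ (i+1) * a) := by noncomm_ring
    _ = ad ^ (i+2) * a ^ (i+2) := by rw [← pow_succ, ← pow_succ]

lemma gW_normal : ∀ (n k : ℕ), ∃ d : ℕ → ℤ,
    gW a ad k n = ((ascF k n : ℤ) : R)
      + ∑ i ∈ Finset.range n, (d i • (ad ^ (i+1) * a ^ (i+1))) := by
  intro n
  induction n with
  | zero => intro k; exact ⟨0, by simp [gW, ascF]⟩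
  | succ n ih =>
    intro k
    obtain ⟨d, hd⟩ := ih (k+1)
    refine ⟨fun i => (if i = 0 then (ascF (k+1) n : ℤ) else d (i-1))
        + ((i : ℤ) + k + 2) * (if i < n then d i else 0), ?_⟩
    show gW a ad (k+1) n * (ad * a + ((k+1:ℕ):R)) = _
    rw [hd]
    set t : ℕ → R := fun i => ad ^ (i+1) * a ^ (i+1) with ht
    set A : R := ((ascF (k+1) n : ℤ) : R) with hA
    set K : R := ((k+1:ℕ) : R) with hK
    have expand : (A + ∑ i ∈ Finset.range n, (d i • t i)) * (ad * a + K)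
        = (((ascF k (n+1) : ℤ)) : R) + (ascF (k+1) n : ℤ) • t 0
          + ∑ i ∈ Finset.range n, (d i • t (i+1))
          + ∑ i ∈ Finset.range n, ((((i:ℤ) + k + 2) * d i) • t i) := by
      have hterm : ∀ i ∈ Finset.range n,
          (d i • t i) * (ad * a + K)
            = d i • t (i+1) + (((i:ℤ) + k + 2) * d i) • t i := by
        intro i _
        have h2 : t i * (ad * a) = t (i+1) + ((i:ℤ)+1) • t i := term_mul_s14 a ad h i
        have h3 : t i * K = ((k:ℤ)+1) • t i := by
          rw [hK, ((Nat.cast_commute (k+1) (t i))).symm.eq]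
          push_cast [zsmul_eq_mul]
          ring_nf
        calc (d i • t i) * (ad * a + K) = d i • (t i * (ad * a)) + d i • (t i * K) := by
              rw [smul_mul_assoc, mul_add, smul_add]
          _ = d i • (t (i+1) + ((i:ℤ)+1) • t i) + d i • (((k:ℤ)+1) • t i) := by rw [h2, h3]
          _ = d i • t (i+1) + ((d i * ((i:ℤ)+1) + d i * ((k:ℤ)+1)) • t i) := by
              rw [smul_add, smul_smul, smul_smul, add_assoc, add_smul]
          _ = d i • t (i+1) + (((i:ℤ) + k + 2) * d i) • t i := by
              rw [show d i * ((i:ℤ)+1) + d i * ((k:ℤ)+1) = ((i:ℤ) + k + 2) * d i from by ring]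
      have hAterm : A * (ad * a + K) = (((ascF k (n+1) : ℤ)) : R) + (ascF (k+1) n : ℤ) • t 0 := by
        rw [mul_add]
        have h5 : A * (ad * a) = (ascF (k+1) n : ℤ) • t 0 := by
          rw [hA, zsmul_eq_mul, ht]; norm_num
        have h4 : A * K = (((ascF k (n+1) : ℤ)) : R) := by
          rw [hA, hK, show ascF k (n+1) = (k+1) * ascF (k+1) n from rfl]
          push_cast
          exact (Nat.cast_commute _ _).eq
        rw [h5, h4, add_comm]
      rw [add_mul, Finset.sum_mul, hAterm, Finset.sum_congr rfl hterm,
        Finset.sum_add_distrib]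
      abel
    rw [expand]
    have split : ∑ i ∈ Finset.range (n+1),
        (((if i = 0 then (ascF (k+1) n : ℤ) else d (i-1))
          + ((i : ℤ) + k + 2) * (if i < n then d i else 0)) • t i)
        = (∑ i ∈ Finset.range n, (d i • t (i+1)) + (ascF (k+1) n : ℤ) • t 0)
          + ∑ i ∈ Finset.range n, ((((i:ℤ) + k + 2) * d i) • t i) := by
      have e1 : ∀ i, (((if i = 0 then (ascF (k+1) n : ℤ) else d (i-1))
          + ((i : ℤ) + k + 2) * (if i < n then d i else 0)) • t i)
          = (if i = 0 then (ascF (k+1) n : ℤ) else d (i-1)) • t i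
            + (((i : ℤ) + k + 2) * (if i < n then d i else 0)) • t i := fun i => add_smul _ _ _
      simp only [e1]
      rw [Finset.sum_add_distrib]
      congr 1
      · rw [Finset.sum_range_succ']
        simp
      · rw [Finset.sum_range_succ, if_neg (lt_irrefl n), mul_zero, zero_smul, add_zero]
        refine Finset.sum_congr rfl fun i hi => ?_
        rw [if_pos (Finset.mem_range.mp hi)]
    rw [split]
    abel

end

/-- The scalar part of `[ad^n - a^n, ad^n + a^n]` under normal ordering is `-2 * n!`:
the commutator equals `-2 * n!` plus a combination of terms `ad^j * a^j` with `j ≥ 1`. -/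
theorem commutator_scalar_part {R : Type*} [Ring R]
    (a ad : R) (h : a * ad - ad * a = 1) (n : ℕ) (hn : 1 ≤ n) :
    ∃ c : ℕ → ℤ,
      (ad ^ n - a ^ n) * (ad ^ n + a ^ n) - (ad ^ n + a ^ n) * (ad ^ n - a ^ n)
        = ((-2 * n.factorial : ℤ) : R)
          + ∑ j ∈ Finset.Icc 1 n, ((c j : R) * (ad ^ j * a ^ j)) := by
  obtain ⟨d, hd⟩ := gW_normal a ad h n 0
  rw [← pow_mul_pow a ad h n, ascF_zero] at hd
  refine ⟨fun j => -2 * d (j - 1) + (if j = n then 2 else 0), ?_⟩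
  have hcomm : (ad ^ n - a ^ n) * (ad ^ n + a ^ n) - (ad ^ n + a ^ n) * (ad ^ n - a ^ n)
      = 2 * (ad ^ n * a ^ n) - 2 * (a ^ n * ad ^ n) := by noncomm_ring
  rw [hcomm, hd]
  have hIcc : ∑ j ∈ Finset.Icc 1 n,
      (((-2 * d (j - 1) + (if j = n then 2 else 0) : ℤ)) : R) * (ad ^ j * a ^ j)
      = ∑ i ∈ Finset.range n,
        (((-2 * d i + (if 1 + i = n then 2 else 0) : ℤ)) : R) * (ad ^ (1+i) * a ^ (1+i)) := by
    rw [← Finset.Ico_add_one_right_eq_Icc, Finset.sum_Ico_eq_sum_range]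
    simp only [Nat.succ_sub_one, Nat.add_sub_cancel, Nat.add_sub_cancel_left]
  rw [hIcc]
  have hsplit : ∑ i ∈ Finset.range n,
      (((-2 * d i + (if 1 + i = n then 2 else 0) : ℤ)) : R) * (ad ^ (1+i) * a ^ (1+i))
      = ∑ i ∈ Finset.range n, ((-2 : R) * (d i • (ad ^ (i+1) * a ^ (i+1))))
        + 2 * (ad ^ n * a ^ n) := by
    have e1 : ∀ i ∈ Finset.range n,
        (((-2 * d i + (if 1 + i = n then 2 else 0) : ℤ)) : R) * (ad ^ (1+i) * a ^ (1+i))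
        = (-2 : R) * (d i • (ad ^ (i+1) * a ^ (i+1)))
          + (if i = n - 1 then (2:R) * (ad ^ (i+1) * a ^ (i+1)) else 0) := by
      intro i hi
      have hi' := Finset.mem_range.mp hi
      have hcond : (1 + i = n) = (i = n - 1) := by
        apply propext; omega
      simp only [hcond]
      push_cast [zsmul_eq_mul, apply_ite (fun z : ℤ => (z : R))]
      rw [show 1 + i = i + 1 by omega]
      by_cases hcase : i = n - 1 <;> simp [hcase] <;> noncomm_ring
    rw [Finset.sum_congr rfl e1, Finset.sum_add_distrib]
    congr 1
    rw [Finset.sum_ite_eq' (Finset.range n) (n-1)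
      (fun i => (2:R) * (ad ^ (i+1) * a ^ (i+1)))]
    rw [if_pos (Finset.mem_range.mpr (by omega : n - 1 < n))]
    rw [show n - 1 + 1 = n from Nat.succ_pred_eq_of_pos hn]
  rw [hsplit, ← Finset.mul_sum]
  push_cast
  noncomm_ring
end

section
/- For the abstract derivation property used throughout: in any ring R, the commutator map ad(H)(X) = H*X - X*H is a derivation, and for a, ad with [a,ad]=1 and N = ad*a, the iterated adjoint satisfies ad(N)^(2j)(ad^k a^ℓ - ad^ℓ a^k) = (k-ℓ)^(2j) * (ad^k a^ℓ - ad^ℓ a^k) and ad(N)^(2j+1)(ad^k a^ℓ - ad^ℓ a^k) = (k-ℓ)^(2j+1) * (ad^k a^ℓ + ad^ℓ a^k) for all j ≥ 0. -/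
/-!
With `N = ad * a`, the relation `[a, ad] = 1` gives `[N, ad] = ad` and `[N, a] = -a`. Since
`X ↦ [N, X]` is a derivation, eigenvalues add under products, so `ad ^ k * a ^ ℓ` and
`ad ^ ℓ * a ^ k` are eigenvectors of `ad(N)` with opposite eigenvalues `±(k - ℓ)`. Iterating,
the two components of `ad ^ k * a ^ ℓ - ad ^ ℓ * a ^ k` pick up `(k - ℓ) ^ n` and `(ℓ - k) ^ n`,
which agree for even `n` and differ by a sign for odd `n`.
-/

theorem AddMonoidHom.iterate_apply_eq_zsmul_of_apply_eq_zsmul {M : Type*} [AddCommGroup M]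
    (f : M →+ M) {c : ℤ} {x : M} (hx : f x = c • x) (n : ℕ) : f^[n] x = c ^ n • x := by
  induction n with
  | zero => simp
  | succ n ih => rw [Function.iterate_succ_apply', ih, map_zsmul, hx, smul_smul, pow_succ]

theorem AddMonoidHom.iterate_sub_of_apply_eq_zsmul_of_apply_eq_neg_zsmul {M : Type*}
    [AddCommGroup M] (f : M →+ M) {c : ℤ} {x y : M} (hx : f x = c • x) (hy : f y = -c • y)
    (n : ℕ) : f^[n] (x - y) = c ^ n • x - (-c) ^ n • y := by
  rw [iterate_map_sub, f.iterate_apply_eq_zsmul_of_apply_eq_zsmul hx,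
    f.iterate_apply_eq_zsmul_of_apply_eq_zsmul hy]

section Commutator

variable {R : Type*} [Ring R]

theorem commutator_mul (H X Y : R) :
    H * (X * Y) - (X * Y) * H = (H * X - X * H) * Y + X * (H * Y - Y * H) := by
  noncomm_ring

theorem commutator_mul_of_eq_zsmul {H X Y : R} {α β : ℤ} (hX : H * X - X * H = α • X)
    (hY : H * Y - Y * H = β • Y) : H * (X * Y) - (X * Y) * H = (α + β) • (X * Y) := by
  rw [commutator_mul, hX, hY, add_smul, smul_mul_assoc, mul_smul_comm]

theorem commutator_pow_of_eq_zsmul {H X : R} {α : ℤ} (hX : H * X - X * H = α • X) (n : ℕ) :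
    H * X ^ n - X ^ n * H = (n * α) • X ^ n := by
  induction n with
  | zero => simp
  | succ n ih =>
    rw [pow_succ, commutator_mul_of_eq_zsmul ih hX]
    push_cast
    ring_nf

variable {a ad : R}

theorem commutator_number_creation (h : a * ad - ad * a = 1) :
    (ad * a) * ad - ad * (ad * a) = (1 : ℤ) • ad := by
  calc (ad * a) * ad - ad * (ad * a) = ad * (a * ad - ad * a) := by noncomm_ring
    _ = (1 : ℤ) • ad := by rw [h, mul_one, one_smul]

theorem commutator_number_annihilation (h : a * ad - ad * a = 1) :
    (ad * a) * a - a * (ad * a) = (-1 : ℤ) • a := by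
  calc (ad * a) * a - a * (ad * a) = -((a * ad - ad * a) * a) := by noncomm_ring
    _ = (-1 : ℤ) • a := by rw [h, one_mul, neg_one_zsmul]

theorem commutator_number_monomial (h : a * ad - ad * a = 1) (k ℓ : ℕ) :
    (ad * a) * (ad ^ k * a ^ ℓ) - (ad ^ k * a ^ ℓ) * (ad * a)
      = ((k : ℤ) - ℓ) • (ad ^ k * a ^ ℓ) := by
  rw [commutator_mul_of_eq_zsmul (commutator_pow_of_eq_zsmul (commutator_number_creation h) k)
    (commutator_pow_of_eq_zsmul (commutator_number_annihilation h) ℓ)]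
  congr 1
  ring

end Commutator

/-- The commutator map is a derivation, and the adjoint action of the number operator
`N = ad*a` on the symmetric/antisymmetric combinations is periodic:
`ad(N)^(2j)` preserves `ad^k a^ℓ - ad^ℓ a^k` up to `(k-ℓ)^(2j)`, while `ad(N)^(2j+1)`
sends it to `(k-ℓ)^(2j+1)` times `ad^k a^ℓ + ad^ℓ a^k`. -/
theorem adjoint_action_periodicity {R : Type*} [Ring R]
    (a ad : R) (h : a * ad - ad * a = 1) (k ℓ j : ℕ) :
    (∀ H X Y : R, H * (X * Y) - (X * Y) * H
        = (H * X - X * H) * Y + X * (H * Y - Y * H)) ∧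
    (fun X => (ad * a) * X - X * (ad * a))^[2 * j] (ad ^ k * a ^ ℓ - ad ^ ℓ * a ^ k)
      = ((k : ℤ) - ℓ) ^ (2 * j) • (ad ^ k * a ^ ℓ - ad ^ ℓ * a ^ k) ∧
    (fun X => (ad * a) * X - X * (ad * a))^[2 * j + 1] (ad ^ k * a ^ ℓ - ad ^ ℓ * a ^ k)
      = ((k : ℤ) - ℓ) ^ (2 * j + 1) • (ad ^ k * a ^ ℓ + ad ^ ℓ * a ^ k) := by
  set D : R →+ R := AddMonoidHom.mulLeft (ad * a) - AddMonoidHom.mulRight (ad * a)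
  have hswap : D (ad ^ ℓ * a ^ k) = -((k : ℤ) - ℓ) • (ad ^ ℓ * a ^ k) := by
    rw [neg_sub]
    exact commutator_number_monomial h ℓ k
  have hiter := D.iterate_sub_of_apply_eq_zsmul_of_apply_eq_neg_zsmul
    (commutator_number_monomial h k ℓ) hswap
  refine ⟨commutator_mul, ?_, ?_⟩
  · change D^[_] _ = _
    rw [hiter, (even_two_mul j).neg_pow, smul_sub]
  · change D^[_] _ = _
    rw [hiter, (odd_two_mul_add_one j).neg_pow, neg_smul, sub_neg_eq_add, smul_add]
end
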